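/- For every fixed T with 0 < T < 1, the function x ↦ a(x, T) := (2x + T)·log(1 + T/x) + (2(1−x) − T)·log(1 − T/(1−x)) is strictly decreasing on the interval 0 < x < 1 − T. -/

import Mathlib

open Matrix MeasureTheory
open scoped ComplexOrder

noncomputable section

/-- Logarithm of a matrix: for a Hermitian matrix, apply the real logarithm to the
eigenvalues via the spectral decomposition (functional calculus); junk value `0`
for non-Hermitian matrices. -/
def matLog {d : ℕ} (A : Matrix (Fin d) (Fin d) ℂ) : Matrix (Fin d) (Fin d) ℂ :=
  if hA : A.IsHermitian then
    (hA.eigenvectorUnitary : Matrix (Fin d) (Fin d) ℂ) *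
      Matrix.diagonal (fun i => (Real.log (hA.eigenvalues i) : ℂ)) *
      (star hA.eigenvectorUnitary : Matrix (Fin d) (Fin d) ℂ)
  else 0

/-- The absolute value `|A| = √(AᴴA)` of a matrix. -/
def matAbs {d : ℕ} (A : Matrix (Fin d) (Fin d) ℂ) : Matrix (Fin d) (Fin d) ℂ :=
  (Matrix.posSemidef_conjTranspose_mul_self A).1.eigenvectorUnitary.1 *
    Matrix.diagonal ((↑) ∘ (√·) ∘ (Matrix.posSemidef_conjTranspose_mul_self A).1.eigenvalues) *
    (star (Matrix.posSemidef_conjTranspose_mul_self A).1.eigenvectorUnitary :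
      Matrix (Fin d) (Fin d) ℂ)

/-- The trace norm `‖A‖₁ = tr √(AᴴA)`. -/
def traceNorm {d : ℕ} (A : Matrix (Fin d) (Fin d) ℂ) : ℝ :=
  ((matAbs A).trace).re

/-- The positive part `A₊ = (A + |A|)/2` of a (Hermitian) matrix. -/
def matPos {d : ℕ} (A : Matrix (Fin d) (Fin d) ℂ) : Matrix (Fin d) (Fin d) ℂ :=
  (2⁻¹ : ℂ) • (A + matAbs A)

/-- The negative part `A₋ = (|A| − A)/2` of a (Hermitian) matrix. -/
def matNeg {d : ℕ} (A : Matrix (Fin d) (Fin d) ℂ) : Matrix (Fin d) (Fin d) ℂ :=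
  (2⁻¹ : ℂ) • (matAbs A - A)

/-- The quantum relative entropy `S(ρ‖σ) = tr ρ (log ρ − log σ)`. -/
def relEnt {d : ℕ} (ρ σ : Matrix (Fin d) (Fin d) ℂ) : ℝ :=
  ((ρ * (matLog ρ - matLog σ)).trace).re

/-- Smallest eigenvalue of a Hermitian matrix. -/
def lamMin {d : ℕ} {A : Matrix (Fin d) (Fin d) ℂ} (hA : A.IsHermitian) : ℝ :=
  ⨅ i, hA.eigenvalues i

/-- The asymmetry function of the binary Kullback–Leibler divergence:
`a(p,t) = (2p+t)·log(1+t/p) + (2(1−p)−t)·log(1−t/(1−p))`. -/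
def asym (p t : ℝ) : ℝ :=
  (2 * p + t) * Real.log (1 + t / p) + (2 * (1 - p) - t) * Real.log (1 - t / (1 - p))

/-!
Writing `φ(p) = (2p + T)·log(1 + T/p)`, the substitution `q = 1 − p − T` turns the second summand
of `a(p, T)` into `−φ(q)`, so `a(p, T) = φ(p) − φ(1 − p − T)`. Hence it suffices that `φ` is
strictly decreasing on `(0, ∞)`: with `x = 1 + T/p` its derivative is `2·log x − (x − 1/x)`,
which is negative for `x > 1` because `s < sinh s` for `s = log x > 0`.
-/

open Set

theorem Real.log_lt_half_sub_inv {x : ℝ} (hx : 1 < x) : Real.log x < (x - x⁻¹) / 2 := by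
  have hs := Real.self_lt_sinh_iff.mpr (Real.log_pos hx)
  rwa [Real.sinh_eq, Real.exp_neg, Real.exp_log (by linarith)] at hs

def asymTerm (t p : ℝ) : ℝ := (2 * p + t) * Real.log (1 + t / p)

theorem asym_eq_asymTerm_sub {p t : ℝ} (hp : 1 - p ≠ 0) (hpt : 1 - p - t ≠ 0) :
    asym p t = asymTerm t p - asymTerm t (1 - p - t) := by
  have hreflect : 1 - t / (1 - p) = (1 + t / (1 - p - t))⁻¹ := by
    rw [one_add_div hpt, sub_add_cancel, inv_div, one_sub_div hp]
  rw [asym, asymTerm, asymTerm, hreflect, Real.log_inv]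
  ring

theorem hasDerivAt_asymTerm {t p : ℝ} (hp : p ≠ 0) (hpt : p + t ≠ 0) :
    HasDerivAt (asymTerm t)
      (2 * Real.log (1 + t / p) - ((1 + t / p) - (1 + t / p)⁻¹)) p := by
  have hratio : HasDerivAt (fun p => 1 + t / p) (-t / p ^ 2) p := by
    simpa [div_eq_mul_inv] using ((hasDerivAt_inv hp).const_mul t).const_add 1
  have hratio_ne : 1 + t / p ≠ 0 := by
    rw [one_add_div hp]
    exact div_ne_zero hpt hp
  have hlin : HasDerivAt (fun p => 2 * p + t) 2 p := by
    simpa using ((hasDerivAt_id p).const_mul 2).add_const t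
  refine (hlin.mul (hratio.log hratio_ne)).congr_deriv ?_
  field_simp
  ring

theorem strictAntiOn_asymTerm {t : ℝ} (ht : 0 < t) : StrictAntiOn (asymTerm t) (Ioi 0) := by
  have hderiv : ∀ p ∈ Ioi (0 : ℝ), HasDerivAt (asymTerm t)
      (2 * Real.log (1 + t / p) - ((1 + t / p) - (1 + t / p)⁻¹)) p :=
    fun p hp => hasDerivAt_asymTerm (ne_of_gt hp) (ne_of_gt (add_pos hp ht))
  refine strictAntiOn_of_deriv_neg (convex_Ioi 0)
    (fun p hp => (hderiv p hp).continuousAt.continuousWithinAt) fun p hp => ?_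
  rw [interior_Ioi] at hp
  rw [(hderiv p hp).deriv]
  have := Real.log_lt_half_sub_inv (lt_add_of_pos_right 1 (div_pos ht hp))
  linarith

theorem strictAntiOn_asym_general (T : ℝ) (hT0 : 0 < T) :
    StrictAntiOn (fun x : ℝ => asym x T) (Set.Ioo 0 (1 - T)) := by
  rintro x ⟨hx0, hxT⟩ y ⟨hy0, hyT⟩ hxy
  have hanti := strictAntiOn_asymTerm hT0
  have hleft : asymTerm T y < asymTerm T x := hanti hx0 hy0 hxy
  have hright : asymTerm T (1 - x - T) < asymTerm T (1 - y - T) :=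
    hanti (show 0 < 1 - y - T by linarith) (show 0 < 1 - x - T by linarith) (by linarith)
  show asym y T < asym x T
  rw [asym_eq_asymTerm_sub (by linarith) (by linarith),
    asym_eq_asymTerm_sub (by linarith) (by linarith)]
  linarith

/-- For fixed `0 < T < 1`, the asymmetry function `x ↦ a(x, T)` is strictly decreasing
on the interval `(0, 1 − T)`. -/
theorem strictAntiOn_asym (T : ℝ) (hT0 : 0 < T) (hT1 : T < 1) :
    StrictAntiOn (fun x : ℝ => asym x T) (Set.Ioo 0 (1 - T)) :=
  strictAntiOn_asym_general T hT0
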